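/- Let n ≥ 2 and sample M points i.i.d. uniformly from Fin n. Let Z be the number of uncovered cells and set q = (1 − 1/n)^M. If n·q < 1, then the probability that at least one cell is uncovered satisfies P(Z ≥ 1) ≤ n·q·(1 − q) / (1 − n·q)². -/

import Mathlib

/-!
Second moment method. Write `Z = ∑ᵢ 1[i uncovered]`. A given cell is missed with probability
`q = (1 - 1/n)^M` and a given pair of distinct cells with probability `r = (1 - 2/n)^M ≤ q²`,
so `E Z = n q` and `E Z² = n q + n (n - 1) r`, whence `Var Z ≤ n q (1 - q)`. When `n q < 1`,
`Z ≥ 1` forces `(Z - n q)² ≥ (1 - n q)²`, and Chebyshev's inequality gives the bound.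
All moments are computed by counting over the `n^M` equally likely sequences.
-/

open Finset

noncomputable def missProb (n k : ℕ) : ℝ := (1 - 1 / n) ^ k

theorem missProb_mul_pow {n : ℕ} (hn : n ≠ 0) (k : ℕ) :
    missProb n k * n ^ k = (n - 1) ^ k := by
  rw [missProb, ← mul_pow]
  congr 1
  field_simp

theorem cast_sub_two_pow_le_missProb_sq_mul_pow {n : ℕ} (hn : n ≠ 0) (k : ℕ) :
    ((n - 2 : ℕ) : ℝ) ^ k ≤ missProb n k ^ 2 * n ^ k := by
  have hpos : (0 : ℝ) < n ^ k := by positivity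
  have hbase : ((n - 2 : ℕ) : ℝ) * n ≤ ((n : ℝ) - 1) ^ 2 := by
    rcases le_or_gt 2 n with h | h
    · push_cast [Nat.cast_sub h]; nlinarith
    · rw [Nat.sub_eq_zero_of_le h.le, Nat.cast_zero, zero_mul]; positivity
  refine le_of_mul_le_mul_right ?_ hpos
  calc ((n - 2 : ℕ) : ℝ) ^ k * n ^ k
      = (((n - 2 : ℕ) : ℝ) * n) ^ k := (mul_pow _ _ _).symm
    _ ≤ (((n : ℝ) - 1) ^ 2) ^ k := pow_le_pow_left₀ (by positivity) hbase k
    _ = (missProb n k * n ^ k) ^ 2 := by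
        rw [missProb_mul_pow hn, ← pow_mul, ← pow_mul, mul_comm]
    _ = missProb n k ^ 2 * n ^ k * n ^ k := by ring

theorem card_mul_sq_le_sum_sq_sub {Ω : Type*} [Fintype Ω] (Z : Ω → ℝ) {m : ℝ}
    (hm : m ≤ 1) (s : Finset Ω) (hs : ∀ ω ∈ s, 1 ≤ Z ω) :
    #s * (1 - m) ^ 2 ≤ ∑ ω, (Z ω - m) ^ 2 :=
  calc #s * (1 - m) ^ 2 = #s • (1 - m) ^ 2 := (nsmul_eq_mul _ _).symm
    _ ≤ ∑ ω ∈ s, (Z ω - m) ^ 2 := card_nsmul_le_sum _ _ _ fun ω hω =>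
        pow_le_pow_left₀ (sub_nonneg.2 hm) (by linarith [hs ω hω]) 2
    _ ≤ ∑ ω, (Z ω - m) ^ 2 := sum_le_univ_sum_of_nonneg fun _ => sq_nonneg _

theorem toReal_toMeasure_uniformOfFintype {α : Type*} [Fintype α] [Nonempty α]
    [MeasurableSpace α] [MeasurableSingletonClass α] (s : Finset α) :
    ((PMF.uniformOfFintype α).toMeasure s).toReal = #s / Fintype.card α := by
  rw [PMF.toMeasure_uniformOfFintype_apply _ s.finite_toSet.measurableSet]
  simp [ENNReal.toReal_div]

section Uncovered

variable {ι α : Type*} [Fintype ι] [Fintype α] [DecidableEq α]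

def uncovered (ω : ι → α) : Finset α := {i | ∀ j, ω j ≠ i}

theorem uncovered_product (ω : ι → α) :
    uncovered ω ×ˢ uncovered ω =
      ({p : α × α | ∀ j, ω j ∉ ({p.1, p.2} : Finset α)} : Finset (α × α)) := by
  ext p
  simp [uncovered, forall_and]

variable [DecidableEq ι]

theorem card_filter_forall_notMem (T : Finset α) :
    #{ω : ι → α | ∀ j, ω j ∉ T} = (Fintype.card α - #T) ^ Fintype.card ι := by
  classical
  have : ({ω : ι → α | ∀ j, ω j ∉ T} : Finset _) = Fintype.piFinset fun _ => Tᶜ := by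
    ext ω; simp [Fintype.mem_piFinset]
  rw [this, Fintype.card_piFinset, prod_const, card_compl, card_univ]

theorem sum_card_uncovered :
    ∑ ω : ι → α, #(uncovered ω) =
      Fintype.card α * (Fintype.card α - 1) ^ Fintype.card ι := by
  calc ∑ ω : ι → α, #(uncovered ω)
      = ∑ i : α, #{ω : ι → α | ∀ j, ω j ≠ i} :=
        sum_card_bipartiteAbove_eq_sum_card_bipartiteBelow _
    _ = ∑ i : α, #{ω : ι → α | ∀ j, ω j ∉ ({i} : Finset α)} := by
        simp only [mem_singleton]
    _ = _ := by
        simp only [card_filter_forall_notMem, card_singleton, sum_const, card_univ, smul_eq_mul]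

theorem sum_card_uncovered_sq :
    ∑ ω : ι → α, #(uncovered ω) ^ 2 =
      Fintype.card α * (Fintype.card α - 1) ^ Fintype.card ι +
        Fintype.card α * (Fintype.card α - 1) * (Fintype.card α - 2) ^ Fintype.card ι := by
  set c := Fintype.card α
  set k := Fintype.card ι
  have off_diag (i : α) : ∑ i' ∈ {i}ᶜ, (c - #{i, i'}) ^ k = (c - 1) * (c - 2) ^ k := by
    rw [sum_congr rfl fun i' hi' => by rw [card_pair (by simpa [eq_comm] using hi')],
      sum_const, card_compl, card_singleton, smul_eq_mul]
  calc ∑ ω : ι → α, #(uncovered ω) ^ 2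
      = ∑ ω : ι → α, #{p : α × α | ∀ j, ω j ∉ ({p.1, p.2} : Finset α)} := by
        refine sum_congr rfl fun ω _ => ?_
        rw [sq, ← card_product, uncovered_product]
    _ = ∑ p : α × α, #{ω : ι → α | ∀ j, ω j ∉ ({p.1, p.2} : Finset α)} :=
        sum_card_bipartiteAbove_eq_sum_card_bipartiteBelow _
    _ = ∑ i : α, ((c - 1) ^ k + (c - 1) * (c - 2) ^ k) := by
        simp only [card_filter_forall_notMem, Fintype.sum_prod_type]
        refine sum_congr rfl fun i _ => ?_
        rw [Fintype.sum_eq_add_sum_compl i, off_diag, pair_eq_singleton, card_singleton]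
    _ = _ := by rw [sum_const, card_univ, smul_eq_mul]; ring

theorem sum_sq_card_uncovered_sub_le [Nonempty α] :
    let c : ℝ := Fintype.card α
    let q := missProb (Fintype.card α) (Fintype.card ι)
    ∑ ω : ι → α, ((#(uncovered ω) : ℝ) - c * q) ^ 2 ≤
      c ^ Fintype.card ι * (c * q * (1 - q)) := by
  intro c q
  have hc : Fintype.card α ≠ 0 := Fintype.card_ne_zero
  have h1 : ∑ ω : ι → α, (#(uncovered ω) : ℝ) =
      Fintype.card α * ((Fintype.card α - 1 : ℕ) : ℝ) ^ Fintype.card ι := by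
    exact_mod_cast sum_card_uncovered
  have h2 : ∑ ω : ι → α, (#(uncovered ω) : ℝ) ^ 2 =
      Fintype.card α * ((Fintype.card α - 1 : ℕ) : ℝ) ^ Fintype.card ι +
        Fintype.card α * ((Fintype.card α - 1 : ℕ) : ℝ) *
          ((Fintype.card α - 2 : ℕ) : ℝ) ^ Fintype.card ι := by
    exact_mod_cast sum_card_uncovered_sq
  rw [Nat.cast_pred (Nat.pos_of_ne_zero hc), ← missProb_mul_pow hc] at h1 h2
  have hb := cast_sub_two_pow_le_missProb_sq_mul_pow hc (Fintype.card ι)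
  set N : ℝ := c ^ Fintype.card ι
  have hc1 : 0 ≤ c * (c - 1) :=
    mul_nonneg (by positivity) (sub_nonneg.2 (Nat.one_le_cast.2 (Nat.pos_of_ne_zero hc)))
  calc ∑ ω : ι → α, ((#(uncovered ω) : ℝ) - c * q) ^ 2
      = ∑ ω : ι → α, (#(uncovered ω) : ℝ) ^ 2
          - 2 * (c * q) * ∑ ω : ι → α, (#(uncovered ω) : ℝ) + N * (c * q) ^ 2 := by
        simp only [sub_sq, sum_add_distrib, sum_sub_distrib, ← sum_mul, ← mul_sum, sum_const,
          card_univ, Fintype.card_fun, nsmul_eq_mul]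
        push_cast; ring
    _ ≤ N * (c * q * (1 - q)) := by
        rw [h1, h2]; linarith [mul_le_mul_of_nonneg_left hb hc1]

end Uncovered

/-- With M i.i.d. uniform samples on `Fin n` (n ≥ 2), setting
`q = (1 - 1/n)^M`, if `n*q < 1` then the probability that at least one cell is
uncovered satisfies `P(Z ≥ 1) ≤ n*q*(1-q) / (1 - n*q)²`. -/
theorem prob_uncovered_chebyshev_bound (n M : ℕ) (hn : 2 ≤ n)
    (hq : (n : ℝ) * (1 - 1 / (n : ℝ)) ^ M < 1) :
    ((@PMF.uniformOfFintype (Fin M → Fin n) _ ⟨fun _ => ⟨0, by omega⟩⟩).toMeasure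
        {ω | ∃ i : Fin n, ∀ j, ω j ≠ i}).toReal ≤
      (n : ℝ) * (1 - 1 / (n : ℝ)) ^ M * (1 - (1 - 1 / (n : ℝ)) ^ M)
        / (1 - (n : ℝ) * (1 - 1 / (n : ℝ)) ^ M) ^ 2 := by
  change _ ≤ n * missProb n M * (1 - missProb n M) / (1 - n * missProb n M) ^ 2
  change (n : ℝ) * missProb n M < 1 at hq
  have : NeZero n := ⟨by omega⟩
  set A : Finset (Fin M → Fin n) := {ω | (uncovered ω).Nonempty}
  have hA : {ω : Fin M → Fin n | ∃ i, ∀ j, ω j ≠ i} = A := by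
    ext ω; simp [A, uncovered, Finset.Nonempty]
  have hcheb := card_mul_sq_le_sum_sq_sub (fun ω => (#(uncovered ω) : ℝ)) hq.le A
    fun ω hω => Nat.one_le_cast.2 (card_pos.2 (mem_filter.1 hω).2)
  have hvar := sum_sq_card_uncovered_sub_le (ι := Fin M) (α := Fin n)
  simp only [Fintype.card_fin] at hvar
  rw [hA, toReal_toMeasure_uniformOfFintype, Fintype.card_fun, Fintype.card_fin,
    Fintype.card_fin, Nat.cast_pow, div_le_div_iff₀ (by positivity) (by nlinarith)]
  linarith
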